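/- arXiv:2308.14987 — 4 statements merged into one kernel-verified Lean document; each statement's English description precedes it below -/
import Mathlib

section
/- Under the hypotheses of the main construction — G a subgroup of Apar(Q), e = (e₁,e₂,e₃) an entry, Θ = (f₁,f₂,f₃;π) ∈ Stab_G^row(e) \ Stab_G^col(e) — the modified triple e' = (e₁, e₂, f_{π(3)}(e_{π(3)})) satisfies f_{π(3)}(e_{π(3)}) ≠ e₃, and consequently the orbit of e under G is disjoint from the set {Θ'(e') : Θ' ∈ G}. -/
/-- A quasigroup operation: all left and right translations are bijective. -/
def IsQuasigroup {Q : Type*} (op : Q → Q → Q) : Prop :=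
  (∀ x, Function.Bijective (op x)) ∧ (∀ y, Function.Bijective fun x => op x y)

/-- The entry set of the Cayley table of `op`, as triples `(x, y, x*y)`. -/
def Ent {Q : Type*} (op : Q → Q → Q) : Set (Fin 3 → Q) :=
  {t | op (t 0) (t 1) = t 2}

/-- The permutation of triples induced by a paratopism datum `(f; π)`:
`t ↦ (i ↦ f (π i) (t (π i)))`. -/
def paraAct {Q : Type*} (f : Fin 3 → Equiv.Perm Q) (π : Equiv.Perm (Fin 3)) :
    Equiv.Perm (Fin 3 → Q) where
  toFun t i := f (π i) (t (π i))
  invFun t i := (f i).symm (t (π.symm i))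
  left_inv t := by funext i; simp
  right_inv t := by funext i; simp

/-- A permutation of triples is paratopic when it is induced by some `(f; π)`. -/
def IsParatopic {Q : Type*} (σ : Equiv.Perm (Fin 3 → Q)) : Prop :=
  ∃ (f : Fin 3 → Equiv.Perm Q) (π : Equiv.Perm (Fin 3)), σ = paraAct f π

/-- A permutation of triples preserves the entries of the Cayley table of `op`. -/
def PreservesEnt {Q : Type*} (op : Q → Q → Q) (σ : Equiv.Perm (Fin 3 → Q)) : Prop :=
  ∀ t ∈ Ent op, σ t ∈ Ent op

/-! The entry `Θ(e)` shares its row with `e` but not its column, so by the Latin property it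
cannot share its symbol either; hence `e'`, which differs from `e` only in its symbol, is not an
entry. Since `G` permutes the entries, the orbit of the entry `e` cannot meet the orbit of the
non-entry `e'`. -/

namespace Ent

variable {Q : Type*} {op : Q → Q → Q}

lemma apply_one_eq_of_apply_zero_of_apply_two (hinj : ∀ x, Function.Injective (op x))
    {s t : Fin 3 → Q} (hs : s ∈ Ent op) (ht : t ∈ Ent op) (h0 : s 0 = t 0) (h2 : s 2 = t 2) :
    s 1 = t 1 := by
  have hs' : op (s 0) (s 1) = s 2 := hs
  have ht' : op (t 0) (t 1) = t 2 := ht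
  exact hinj (t 0) (by rw [← h0, hs', h2, ← ht', h0])

lemma update_two_notMem {t : Fin 3 → Q} (ht : t ∈ Ent op) {c : Q} (hc : c ≠ t 2) :
    Function.update t 2 c ∉ Ent op := by
  intro h
  have h' : op (t 0) (t 1) = c := by simpa [Ent] using h
  exact hc (h'.symm.trans ht)

end Ent

lemma image_apply_inter_image_apply_eq_empty {α : Type*} (G : Subgroup (Equiv.Perm α))
    {S : Set α} (hS : ∀ σ ∈ G, ∀ x ∈ S, σ x ∈ S) {x y : α} (hx : x ∈ S) (hy : y ∉ S) :
    ((fun σ : Equiv.Perm α => σ x) '' G) ∩ ((fun σ : Equiv.Perm α => σ y) '' G) = ∅ := by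
  refine Set.eq_empty_of_forall_notMem ?_
  rintro _ ⟨⟨σ, hσ, rfl⟩, ⟨τ, hτ, hτσ⟩⟩
  apply hy
  have hyσ : y = τ⁻¹ (σ x) := Equiv.Perm.eq_inv_iff_eq.2 hτσ
  exact hyσ ▸ hS _ (inv_mem hτ) _ (hS σ hσ x hx)

/-- if `Θ = paraAct f π ∈ G` stabilizes the row of the entry `e` but not
its column, then the modified triple `e' = (e 0, e 1, f (π 2) (e (π 2)))` has third
coordinate different from `e 2`, and the `G`-orbit of `e` is disjoint from the set
`{Θ'(e') : Θ' ∈ G}`. -/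
theorem modified_triple_orbit_disjoint {Q : Type*} (op : Q → Q → Q)
    (hQ : IsQuasigroup op) (G : Subgroup (Equiv.Perm (Fin 3 → Q)))
    (hG : ∀ σ ∈ G, IsParatopic σ ∧ PreservesEnt op σ)
    (e : Fin 3 → Q) (he : e ∈ Ent op)
    (f : Fin 3 → Equiv.Perm Q) (π : Equiv.Perm (Fin 3))
    (hΘG : paraAct f π ∈ G)
    (hrow : paraAct f π e 0 = e 0)
    (hcol : paraAct f π e 1 ≠ e 1) :
    f (π 2) (e (π 2)) ≠ e 2 ∧
    ((fun σ : Equiv.Perm (Fin 3 → Q) => σ e) '' G) ∩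
      ((fun σ : Equiv.Perm (Fin 3 → Q) => σ (Function.update e 2 (f (π 2) (e (π 2))))) '' G)
      = ∅ := by
  have hpres : ∀ σ ∈ G, ∀ t ∈ Ent op, σ t ∈ Ent op := fun σ hσ => (hG σ hσ).2
  have hne : f (π 2) (e (π 2)) ≠ e 2 := fun h2 =>
    hcol <| Ent.apply_one_eq_of_apply_zero_of_apply_two (fun x => (hQ.1 x).1)
      (hpres _ hΘG e he) he hrow h2
  exact ⟨hne, image_apply_inter_image_apply_eq_empty G hpres he (Ent.update_two_notMem he hne)⟩
end

section
/- Let G be a finite group with identity 1 and a,b,c ∈ G \ {1} with abc = 1 and ⟨a⟩ ∩ ⟨b⟩ = ⟨a⟩ ∩ ⟨c⟩ = ⟨b⟩ ∩ ⟨c⟩ = {1}. Let A = ⟨a⟩, B = ⟨b⟩, C = ⟨c⟩. Then the map g ↦ (gA, gB, gC) induces a partial Latin square T° = {(gA,gB,gC) : g ∈ G} of size |G|: distinct elements g, g' yield triples agreeing in at most one coordinate, and T° has |G:A| nonempty rows each with |A| entries, |G:B| nonempty columns each with |B| entries, and |G:C| symbols each occurring |C| times. -/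
/-!
Two elements with the same cosets modulo two subgroups with trivial intersection differ by an
element of that intersection, hence are equal. So any two coordinates of `g ↦ (gA, gB, gC)`
determine `g`, and each coordinate of `T°` is a coset map `G → G ⧸ H`, which is onto and whose
fibres are cosets of `H`.
-/

open Set Function QuotientGroup

namespace QuotientGroup

variable {G : Type*} [Group G]

lemma eq_of_mk_eq_of_mk_eq {H K : Subgroup G} (hHK : H ⊓ K = ⊥) {g g' : G}
    (hH : (g : G ⧸ H) = g') (hK : (g : G ⧸ K) = g') : g = g' := by
  rw [QuotientGroup.eq] at hH hK
  have hmem : g⁻¹ * g' ∈ H ⊓ K := ⟨hH, hK⟩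
  rwa [hHK, Subgroup.mem_bot, inv_mul_eq_one] at hmem

variable {β : Type*} {H : Subgroup G} {f : G → β}

lemma ncard_image_range_of_comp_eq_mk (p : β → G ⧸ H) (hpf : p ∘ f = mk) :
    (p '' range f).ncard = H.index := by
  rw [← range_comp, hpf, mk_surjective.range_eq, ncard_univ]
  rfl

lemma ncard_range_inter_preimage_of_comp_eq_mk (hf : Injective f) (p : β → G ⧸ H)
    (hpf : p ∘ f = mk) (q : G ⧸ H) : (range f ∩ p ⁻¹' {q}).ncard = Nat.card H := by
  rw [← image_preimage_eq_range_inter, ncard_image_of_injective _ hf, ← preimage_comp, hpf,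
    ← Nat.card_coe_set_eq, card_preimage_mk, Nat.card_coe_set_eq, ncard_singleton, mul_one]

end QuotientGroup

theorem coset_triples_partial_latin_square_general {G : Type*} [Group G]
    (a b c : G)
    (hAB : Subgroup.zpowers a ⊓ Subgroup.zpowers b = ⊥)
    (hAC : Subgroup.zpowers a ⊓ Subgroup.zpowers c = ⊥)
    (hBC : Subgroup.zpowers b ⊓ Subgroup.zpowers c = ⊥)
    (T : Set ((G ⧸ Subgroup.zpowers a) × (G ⧸ Subgroup.zpowers b) × (G ⧸ Subgroup.zpowers c)))
    (hT : T = Set.range fun g : G =>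
      ((QuotientGroup.mk g : G ⧸ Subgroup.zpowers a),
       (QuotientGroup.mk g : G ⧸ Subgroup.zpowers b),
       (QuotientGroup.mk g : G ⧸ Subgroup.zpowers c))) :
    T.ncard = Nat.card G ∧
    (∀ g g' : G, g ≠ g' →
      ¬((QuotientGroup.mk g : G ⧸ Subgroup.zpowers a) = QuotientGroup.mk g' ∧
        (QuotientGroup.mk g : G ⧸ Subgroup.zpowers b) = QuotientGroup.mk g') ∧
      ¬((QuotientGroup.mk g : G ⧸ Subgroup.zpowers a) = QuotientGroup.mk g' ∧
        (QuotientGroup.mk g : G ⧸ Subgroup.zpowers c) = QuotientGroup.mk g') ∧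
      ¬((QuotientGroup.mk g : G ⧸ Subgroup.zpowers b) = QuotientGroup.mk g' ∧
        (QuotientGroup.mk g : G ⧸ Subgroup.zpowers c) = QuotientGroup.mk g')) ∧
    Set.ncard {r | ∃ t ∈ T, t.1 = r} = (Subgroup.zpowers a).index ∧
    (∀ r, (∃ t ∈ T, t.1 = r) →
      Set.ncard {t ∈ T | t.1 = r} = Nat.card (Subgroup.zpowers a)) ∧
    Set.ncard {col | ∃ t ∈ T, t.2.1 = col} = (Subgroup.zpowers b).index ∧
    (∀ col, (∃ t ∈ T, t.2.1 = col) →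
      Set.ncard {t ∈ T | t.2.1 = col} = Nat.card (Subgroup.zpowers b)) ∧
    Set.ncard {s | ∃ t ∈ T, t.2.2 = s} = (Subgroup.zpowers c).index ∧
    (∀ s, (∃ t ∈ T, t.2.2 = s) →
      Set.ncard {t ∈ T | t.2.2 = s} = Nat.card (Subgroup.zpowers c)) := by
  subst hT
  have hinj : Injective fun g : G =>
      ((g : G ⧸ Subgroup.zpowers a), (g : G ⧸ Subgroup.zpowers b), (g : G ⧸ Subgroup.zpowers c)) :=
    fun g g' h => eq_of_mk_eq_of_mk_eq hAB (congrArg (·.1) h) (congrArg (·.2.1) h)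
  refine ⟨?_, fun g g' hne => ⟨?_, ?_, ?_⟩, ?_, ?_, ?_, ?_, ?_, ?_⟩
  · rw [← image_univ, ncard_image_of_injective _ hinj, ncard_univ]
  · exact fun ⟨hA, hB⟩ => hne (eq_of_mk_eq_of_mk_eq hAB hA hB)
  · exact fun ⟨hA, hC⟩ => hne (eq_of_mk_eq_of_mk_eq hAC hA hC)
  · exact fun ⟨hB, hC⟩ => hne (eq_of_mk_eq_of_mk_eq hBC hB hC)
  · exact ncard_image_range_of_comp_eq_mk Prod.fst rfl
  · exact fun q _ => ncard_range_inter_preimage_of_comp_eq_mk hinj Prod.fst rfl q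
  · exact ncard_image_range_of_comp_eq_mk (Prod.fst ∘ Prod.snd) rfl
  · exact fun q _ => ncard_range_inter_preimage_of_comp_eq_mk hinj (Prod.fst ∘ Prod.snd) rfl q
  · exact ncard_image_range_of_comp_eq_mk (Prod.snd ∘ Prod.snd) rfl
  · exact fun q _ => ncard_range_inter_preimage_of_comp_eq_mk hinj (Prod.snd ∘ Prod.snd) rfl q

/-- if `abc = 1` and the cyclic subgroups `A = ⟨a⟩`, `B = ⟨b⟩`, `C = ⟨c⟩`
intersect pairwise trivially, then `T° = {(gA, gB, gC) : g ∈ G}` is a partial Latin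
square of size `|G|`, with `|G:A|` nonempty rows each containing `|A|` entries, `|G:B|`
nonempty columns each containing `|B|` entries, and `|G:C|` symbols each occurring `|C|`
times. -/
theorem coset_triples_partial_latin_square {G : Type*} [Group G] [Finite G]
    (a b c : G) (ha : a ≠ 1) (hb : b ≠ 1) (hc : c ≠ 1) (habc : a * b * c = 1)
    (hAB : Subgroup.zpowers a ⊓ Subgroup.zpowers b = ⊥)
    (hAC : Subgroup.zpowers a ⊓ Subgroup.zpowers c = ⊥)
    (hBC : Subgroup.zpowers b ⊓ Subgroup.zpowers c = ⊥)
    (T : Set ((G ⧸ Subgroup.zpowers a) × (G ⧸ Subgroup.zpowers b) × (G ⧸ Subgroup.zpowers c)))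
    (hT : T = Set.range fun g : G =>
      ((QuotientGroup.mk g : G ⧸ Subgroup.zpowers a),
       (QuotientGroup.mk g : G ⧸ Subgroup.zpowers b),
       (QuotientGroup.mk g : G ⧸ Subgroup.zpowers c))) :
    T.ncard = Nat.card G ∧
    (∀ g g' : G, g ≠ g' →
      ¬((QuotientGroup.mk g : G ⧸ Subgroup.zpowers a) = QuotientGroup.mk g' ∧
        (QuotientGroup.mk g : G ⧸ Subgroup.zpowers b) = QuotientGroup.mk g') ∧
      ¬((QuotientGroup.mk g : G ⧸ Subgroup.zpowers a) = QuotientGroup.mk g' ∧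
        (QuotientGroup.mk g : G ⧸ Subgroup.zpowers c) = QuotientGroup.mk g') ∧
      ¬((QuotientGroup.mk g : G ⧸ Subgroup.zpowers b) = QuotientGroup.mk g' ∧
        (QuotientGroup.mk g : G ⧸ Subgroup.zpowers c) = QuotientGroup.mk g')) ∧
    Set.ncard {r | ∃ t ∈ T, t.1 = r} = (Subgroup.zpowers a).index ∧
    (∀ r, (∃ t ∈ T, t.1 = r) →
      Set.ncard {t ∈ T | t.1 = r} = Nat.card (Subgroup.zpowers a)) ∧
    Set.ncard {col | ∃ t ∈ T, t.2.1 = col} = (Subgroup.zpowers b).index ∧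
    (∀ col, (∃ t ∈ T, t.2.1 = col) →
      Set.ncard {t ∈ T | t.2.1 = col} = Nat.card (Subgroup.zpowers b)) ∧
    Set.ncard {s | ∃ t ∈ T, t.2.2 = s} = (Subgroup.zpowers c).index ∧
    (∀ s, (∃ t ∈ T, t.2.2 = s) →
      Set.ncard {t ∈ T | t.2.2 = s} = Nat.card (Subgroup.zpowers c)) :=
  coset_triples_partial_latin_square_general a b c hAB hAC hBC T hT
end

section
/- Under the hypotheses abc = 1 and pairwise trivial intersections of ⟨a⟩, ⟨b⟩, ⟨c⟩ in a finite group G, the pair T° = {(gA,gB,gC) : g ∈ G} and T* = {(gA,gB,ga⁻¹C) : g ∈ G} is a Latin bitrade: they are disjoint, of equal size |G|, and for each row gA (respectively column gB) the set of symbols occupied by T° equals that occupied by T*. -/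
/-!
Because `⟨a⟩ ∩ ⟨b⟩ = 1`, an element `g` is determined by its row `gA` and column `gB`, so both
`T°` and `T*` are in bijection with `G`, and a common triple would force `gC = ga⁻¹C`, i.e.
`a ∈ ⟨c⟩`. Replacing `g` by `ga` leaves the row and turns the symbol `ga⁻¹C` of `T*` into `gC`;
replacing `g` by `gb⁻¹` leaves the column and turns it into `g(ab)⁻¹C = gcC = gC`.
-/

open Function Set Subgroup QuotientGroup

namespace Set

theorem setOf_exists_mem_range_congr {ι ι' α β γ : Type*} {F : ι → α} {F' : ι' → α}
    (p : α → β) (h : range (p ∘ F) = range (p ∘ F')) (P : β → γ → Prop) :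
    {s | ∃ t ∈ range F, P (p t) s} = {s | ∃ t ∈ range F', P (p t) s} := by
  ext s
  have hF : (∃ t ∈ range F, P (p t) s) ↔ ∃ y ∈ range (p ∘ F), P y s := by simp
  have hF' : (∃ t ∈ range F', P (p t) s) ↔ ∃ y ∈ range (p ∘ F'), P y s := by simp
  simp only [mem_ofPred_eq, hF, hF', h]

end Set

namespace QuotientGroup

variable {G : Type*} [Group G]

theorem mk_prod_mk_injective_of_inf_eq_bot {H K : Subgroup G} (h : H ⊓ K = ⊥) :
    Injective fun g : G => ((g : G ⧸ H), (g : G ⧸ K)) := by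
  intro g g' hg
  simp only [Prod.mk.injEq, QuotientGroup.eq] at hg
  have hmem : g⁻¹ * g' ∈ H ⊓ K := hg
  rw [h, mem_bot] at hmem
  exact inv_mul_eq_one.mp hmem

theorem mk_mul_ne_of_notMem {H : Subgroup G} (g : G) {x : G} (hx : x ∉ H) :
    ((g * x : G) : G ⧸ H) ≠ g := by
  rwa [Ne, QuotientGroup.eq, mul_inv_rev, inv_mul_cancel_right, inv_mem_iff]

theorem range_mk_prod_mk_mul_eq {H K : Subgroup G} {x y : G} (hx : x ∈ H) (hxy : x * y ∈ K) :
    range (fun g : G => ((g : G ⧸ H), (g : G ⧸ K))) =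
      range (fun g : G => ((g : G ⧸ H), ((g * y : G) : G ⧸ K))) := by
  rw [← (mul_right_surjective x).range_comp (fun g : G => ((g : G ⧸ H), ((g * y : G) : G ⧸ K)))]
  congr 1
  funext g
  simp only [comp_apply, mul_assoc, mk_mul_of_mem g hx, mk_mul_of_mem g hxy]

theorem disjoint_range_mk_mk_mk_mul {H K L : Subgroup G} (hHK : H ⊓ K = ⊥) {x : G} (hx : x ∉ L) :
    Disjoint (range fun g : G => ((g : G ⧸ H), (g : G ⧸ K), (g : G ⧸ L)))
      (range fun g : G => ((g : G ⧸ H), (g : G ⧸ K), ((g * x : G) : G ⧸ L))) := by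
  rw [Set.disjoint_left]
  rintro _ ⟨g, rfl⟩ ⟨h, hh⟩
  simp only [Prod.mk.injEq] at hh
  obtain rfl : h = g := mk_prod_mk_injective_of_inf_eq_bot hHK (Prod.ext hh.1 hh.2.1)
  exact mk_mul_ne_of_notMem h hx hh.2.2

end QuotientGroup

theorem coset_triples_bitrade_general {G : Type*} [Group G]
    (a b c : G) (ha : a ≠ 1) (habc : a * b * c = 1)
    (hAB : Subgroup.zpowers a ⊓ Subgroup.zpowers b = ⊥)
    (hAC : Subgroup.zpowers a ⊓ Subgroup.zpowers c = ⊥)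
    (T Tstar : Set ((G ⧸ Subgroup.zpowers a) × (G ⧸ Subgroup.zpowers b) ×
      (G ⧸ Subgroup.zpowers c)))
    (hT : T = Set.range fun g : G =>
      ((QuotientGroup.mk g : G ⧸ Subgroup.zpowers a),
       (QuotientGroup.mk g : G ⧸ Subgroup.zpowers b),
       (QuotientGroup.mk g : G ⧸ Subgroup.zpowers c)))
    (hTstar : Tstar = Set.range fun g : G =>
      ((QuotientGroup.mk g : G ⧸ Subgroup.zpowers a),
       (QuotientGroup.mk g : G ⧸ Subgroup.zpowers b),
       (QuotientGroup.mk (g * a⁻¹) : G ⧸ Subgroup.zpowers c))) :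
    T ∩ Tstar = ∅ ∧
    T.ncard = Nat.card G ∧
    Tstar.ncard = Nat.card G ∧
    (∀ r : G ⧸ Subgroup.zpowers a,
      {s | ∃ t ∈ T, t.1 = r ∧ t.2.2 = s} = {s | ∃ t ∈ Tstar, t.1 = r ∧ t.2.2 = s}) ∧
    (∀ col : G ⧸ Subgroup.zpowers b,
      {s | ∃ t ∈ T, t.2.1 = col ∧ t.2.2 = s} =
        {s | ∃ t ∈ Tstar, t.2.1 = col ∧ t.2.2 = s}) := by
  subst hT hTstar
  have hinj := mk_prod_mk_injective_of_inf_eq_bot hAB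
  have ha_notMem : a⁻¹ ∉ zpowers c := fun hac =>
    ha <| inv_eq_one.mp <| disjoint_def.mp (disjoint_iff.mpr hAC) (inv_mem (mem_zpowers a)) hac
  have hba : b⁻¹ * a⁻¹ ∈ zpowers c := by
    rw [← mul_inv_rev, eq_inv_of_mul_eq_one_left habc, inv_inv]
    exact mem_zpowers c
  refine ⟨disjoint_iff_inter_eq_empty.mp (disjoint_range_mk_mk_mk_mul hAB ha_notMem),
    ncard_range_of_injective (hinj.of_comp (f := fun t => (t.1, t.2.1))),
    ncard_range_of_injective (hinj.of_comp (f := fun t => (t.1, t.2.1))),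
    fun r => ?_, fun col => ?_⟩
  · exact setOf_exists_mem_range_congr (fun t : _ × _ × _ => (t.1, t.2.2))
      (range_mk_prod_mk_mul_eq (mem_zpowers a) (by simp)) (fun x s => x.1 = r ∧ x.2 = s)
  · exact setOf_exists_mem_range_congr (fun t : _ × _ × _ => (t.2.1, t.2.2))
      (range_mk_prod_mk_mul_eq (inv_mem (mem_zpowers b)) hba) (fun x s => x.1 = col ∧ x.2 = s)

/-- under `abc = 1` and pairwise trivial intersections of `⟨a⟩, ⟨b⟩, ⟨c⟩`,
the pair `T° = {(gA,gB,gC)}` and `T* = {(gA,gB,ga⁻¹C)}` is a Latin bitrade: disjoint,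
of equal size `|G|`, and each row (respectively column) contains the same set of symbols
in `T°` and in `T*`. -/
theorem coset_triples_bitrade {G : Type*} [Group G] [Finite G]
    (a b c : G) (ha : a ≠ 1) (hb : b ≠ 1) (hc : c ≠ 1) (habc : a * b * c = 1)
    (hAB : Subgroup.zpowers a ⊓ Subgroup.zpowers b = ⊥)
    (hAC : Subgroup.zpowers a ⊓ Subgroup.zpowers c = ⊥)
    (hBC : Subgroup.zpowers b ⊓ Subgroup.zpowers c = ⊥)
    (T Tstar : Set ((G ⧸ Subgroup.zpowers a) × (G ⧸ Subgroup.zpowers b) ×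
      (G ⧸ Subgroup.zpowers c)))
    (hT : T = Set.range fun g : G =>
      ((QuotientGroup.mk g : G ⧸ Subgroup.zpowers a),
       (QuotientGroup.mk g : G ⧸ Subgroup.zpowers b),
       (QuotientGroup.mk g : G ⧸ Subgroup.zpowers c)))
    (hTstar : Tstar = Set.range fun g : G =>
      ((QuotientGroup.mk g : G ⧸ Subgroup.zpowers a),
       (QuotientGroup.mk g : G ⧸ Subgroup.zpowers b),
       (QuotientGroup.mk (g * a⁻¹) : G ⧸ Subgroup.zpowers c))) :
    T ∩ Tstar = ∅ ∧
    T.ncard = Nat.card G ∧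
    Tstar.ncard = Nat.card G ∧
    (∀ r : G ⧸ Subgroup.zpowers a,
      {s | ∃ t ∈ T, t.1 = r ∧ t.2.2 = s} = {s | ∃ t ∈ Tstar, t.1 = r ∧ t.2.2 = s}) ∧
    (∀ col : G ⧸ Subgroup.zpowers b,
      {s | ∃ t ∈ T, t.2.1 = col ∧ t.2.2 = s} =
        {s | ∃ t ∈ Tstar, t.2.1 = col ∧ t.2.2 = s}) :=
  coset_triples_bitrade_general a b c ha habc hAB hAC T Tstar hT hTstar
end

section
/- Let θ be the quadratic orthomorphism of F_q determined by distinct constants a, b (with ab and (a−1)(b−1) nonzero squares). Then the maps α(x) = (b/a)·x and ᾱ(x) = ((b−1)/(a−1))·(x−1) + 1 are automorphisms of the Latin square L(θ); moreover α fixes the row 0 of the entry e = (0,1,a) (i.e., α(0) = 0) but not its column (α(1) = b/a ≠ 1), and ᾱ fixes its column (ᾱ(1) = 1). -/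
/-!
Multiplication by a nonzero square `c` preserves the squares and the nonsquares of `F`, and `θ`
is linear on each of these classes, so `θ (c * x) = c * θ x`. An affine map `f` with linear part
`c` turns an entry `(i, j, θ (j - i) + i)` into `(f i, f j, f i + c * θ (j - i))`, which is the
entry `(f i, f j, θ (f j - f i) + f i)` by this commutation. Both `b / a` and
`(b - 1) / (a - 1)` are nonzero squares, being `a * b` and `(a - 1) * (b - 1)` divided by squares.
-/

section Field

variable {F : Type*} [Field F]

lemma isSquare_div_of_isSquare_mul {x y : F} (h : IsSquare (x * y)) : IsSquare (y / x) := by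
  have hdiv : y / x = x * y / (x * x) := by
    rcases eq_or_ne x 0 with rfl | hx
    · simp
    · rw [mul_div_mul_left y x hx]
  rw [hdiv]
  exact h.div (IsSquare.mul_self x)

lemma map_mul_of_isSquare {a b : F} {θ : F → F} (hθ0 : θ 0 = 0)
    (hθsq : ∀ x : F, x ≠ 0 → IsSquare x → θ x = a * x)
    (hθns : ∀ x : F, x ≠ 0 → ¬IsSquare x → θ x = b * x)
    {c : F} (hc : c ≠ 0) (hcs : IsSquare c) (x : F) : θ (c * x) = c * θ x := by
  rcases eq_or_ne x 0 with rfl | hx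
  · rw [mul_zero, hθ0, mul_zero]
  have hcx : c * x ≠ 0 := mul_ne_zero hc hx
  by_cases hxs : IsSquare x
  · rw [hθsq _ hcx (hcs.mul hxs), hθsq x hx hxs, mul_left_comm]
  · have hcxs : ¬IsSquare (c * x) := fun h => hxs <| by
      simpa only [inv_mul_cancel_left₀ hc] using hcs.inv.mul h
    rw [hθns _ hcx hcxs, hθns x hx hxs, mul_left_comm]

variable {f : F → F} {c : F}

lemma bijective_of_sub_eq_mul (hc : c ≠ 0) (hf : ∀ x y, f y - f x = c * (y - x)) :
    Function.Bijective f := by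
  have hf0 : ∀ x, f x = f 0 + c * x := fun x => by
    rw [← sub_zero x, ← hf 0 x, sub_zero, add_sub_cancel]
  refine ⟨fun x y hxy => ?_, fun y => ⟨(y - f 0) / c, ?_⟩⟩
  · rw [hf0 x, hf0 y] at hxy
    exact mul_left_cancel₀ hc (add_left_cancel hxy)
  · rw [hf0, mul_div_cancel₀ _ hc, add_sub_cancel]

lemma map_entry_of_sub_eq_mul {θ : F → F} (hθ : ∀ x, θ (c * x) = c * θ x)
    (hf : ∀ x y, f y - f x = c * (y - x)) (i j : F) :
    f (θ (j - i) + i) = θ (f j - f i) + f i := by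
  rw [hf, hθ, ← sub_eq_iff_eq_add, hf, add_sub_cancel_right]

end Field

theorem quadratic_orthomorphism_automorphisms_general {F : Type*} [Field F]
    (a b : F) (hab : a ≠ b)
    (hs1 : IsSquare (a * b)) (hs1' : a * b ≠ 0)
    (hs2 : IsSquare ((a - 1) * (b - 1))) (hs2' : (a - 1) * (b - 1) ≠ 0)
    (θ : F → F) (hθ0 : θ 0 = 0)
    (hθsq : ∀ x : F, x ≠ 0 → IsSquare x → θ x = a * x)
    (hθns : ∀ x : F, x ≠ 0 → ¬IsSquare x → θ x = b * x)
    (α αbar : F → F)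
    (hα : ∀ x, α x = (b / a) * x)
    (hαbar : ∀ x, αbar x = ((b - 1) / (a - 1)) * (x - 1) + 1) :
    Function.Bijective α ∧
    Function.Bijective αbar ∧
    (∀ i j s : F, s = θ (j - i) + i → α s = θ (α j - α i) + α i) ∧
    (∀ i j s : F, s = θ (j - i) + i → αbar s = θ (αbar j - αbar i) + αbar i) ∧
    α 0 = 0 ∧ α 1 = b / a ∧ b / a ≠ 1 ∧ αbar 1 = 1 := by
  obtain ⟨ha, hb⟩ := mul_ne_zero_iff.mp hs1'
  obtain ⟨ha1, hb1⟩ := mul_ne_zero_iff.mp hs2'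
  have hθα := map_mul_of_isSquare hθ0 hθsq hθns (div_ne_zero hb ha)
    (isSquare_div_of_isSquare_mul hs1)
  have hθαbar := map_mul_of_isSquare hθ0 hθsq hθns (div_ne_zero hb1 ha1)
    (isSquare_div_of_isSquare_mul hs2)
  have hα_sub : ∀ x y, α y - α x = b / a * (y - x) := fun x y => by
    rw [hα, hα, mul_sub]
  have hαbar_sub : ∀ x y, αbar y - αbar x = (b - 1) / (a - 1) * (y - x) := fun x y => by
    rw [hαbar, hαbar]; ring
  refine ⟨bijective_of_sub_eq_mul (div_ne_zero hb ha) hα_sub,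
    bijective_of_sub_eq_mul (div_ne_zero hb1 ha1) hαbar_sub,
    fun i j s hs => hs ▸ map_entry_of_sub_eq_mul hθα hα_sub i j,
    fun i j s hs => hs ▸ map_entry_of_sub_eq_mul hθαbar hαbar_sub i j,
    by rw [hα, mul_zero], by rw [hα, mul_one], fun h => hab ((div_eq_one_iff_eq ha).mp h).symm,
    by rw [hαbar, sub_self, mul_zero, zero_add]⟩

/-- for the quadratic orthomorphism `θ` of a finite field determined by
distinct constants `a ≠ b` (with `ab` and `(a−1)(b−1)` nonzero squares), the maps
`α(x) = (b/a)·x` and `ᾱ(x) = ((b−1)/(a−1))·(x−1) + 1` are automorphisms of the Latin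
square `L(θ)` with entries `(i, j, θ(j−i)+i)`; moreover `α(0) = 0`, `α(1) = b/a ≠ 1`,
and `ᾱ(1) = 1`. -/
theorem quadratic_orthomorphism_automorphisms {F : Type*} [Field F] [Fintype F]
    (a b : F) (hab : a ≠ b)
    (hs1 : IsSquare (a * b)) (hs1' : a * b ≠ 0)
    (hs2 : IsSquare ((a - 1) * (b - 1))) (hs2' : (a - 1) * (b - 1) ≠ 0)
    (θ : F → F) (hθ0 : θ 0 = 0)
    (hθsq : ∀ x : F, x ≠ 0 → IsSquare x → θ x = a * x)
    (hθns : ∀ x : F, x ≠ 0 → ¬IsSquare x → θ x = b * x)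
    (α αbar : F → F)
    (hα : ∀ x, α x = (b / a) * x)
    (hαbar : ∀ x, αbar x = ((b - 1) / (a - 1)) * (x - 1) + 1) :
    Function.Bijective α ∧
    Function.Bijective αbar ∧
    (∀ i j s : F, s = θ (j - i) + i → α s = θ (α j - α i) + α i) ∧
    (∀ i j s : F, s = θ (j - i) + i → αbar s = θ (αbar j - αbar i) + αbar i) ∧
    α 0 = 0 ∧ α 1 = b / a ∧ b / a ≠ 1 ∧ αbar 1 = 1 :=
  quadratic_orthomorphism_automorphisms_general a b hab hs1 hs1' hs2 hs2' θ hθ0 hθsq hθns α αbar hα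
    hαbar
end
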